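/- arXiv:math/0610389 — 4 statements merged into one kernel-verified Lean document; each statement's English description precedes it below -/
import Mathlib

section
/- Let U be uniform on [0,1] and U_1, U_2, … i.i.d. uniform on [0,1] independent of U. Set Y_n = (1/n)∑_{k=1}^n 1_{U_k ≤ U}. Then for φ(y) = e^{2iπpy} and χ(y) = e^{2iπqy} with p, q ∈ ℤ, lim_n n·E[(φ(Y_n) − φ(U))χ(U)] = E[((U−U²)/2)·φ''(U)·χ(U)] = ∫₀¹ (−(y−y²)/2)(2πp)² e^{2iπ(p+q)y} dy. -/
/-!
Conditionally on `U = y`, `n Y_n` is binomial with parameters `n, y`, so independence and Fubini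
give `𝔼[(e^{ζ Y_n} - e^{ζ U}) χ(U)] = ∫₀¹ (w_n^n - e^{ζ y}) χ(y) dy` with
`w_n = 1 + (e^{ζ/n} - 1) y`. Put `v_n = e^{ζ y / n}`, so that `v_n^n = e^{ζ y}`. Second-order
Taylor expansion of `exp` gives `n² (w_n - v_n) → ζ² (y - y²) / 2`, and
`w_n^n - v_n^n = n v_n^{n-1} (w_n - v_n) + O(n² |w_n - v_n|²)`, hence
`n (w_n^n - e^{ζ y}) → ζ² (y - y²) / 2 · e^{ζ y}`. For `Re ζ ≤ 0` all of `w_n, v_n` lie in the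
unit disc, so `n |w_n^n - v_n^n| ≤ n² |w_n - v_n|` is bounded uniformly in `y ∈ [0, 1]`, and
dominated convergence concludes. For `ζ = 2iπp` one has `ζ² = -(2πp)²`.
-/

open MeasureTheory ProbabilityTheory Filter
open Finset Topology Complex

theorem norm_pow_sub_pow_le_nat_mul_norm_sub {R : Type*} [NormedRing R] [NormOneClass R]
    {w v : R} (hw : ‖w‖ ≤ 1) (hv : ‖v‖ ≤ 1) : ∀ n : ℕ, ‖w ^ n - v ^ n‖ ≤ n * ‖w - v‖
  | 0 => by simp
  | n + 1 => by
    calc ‖w ^ (n + 1) - v ^ (n + 1)‖ = ‖w ^ n * (w - v) + (w ^ n - v ^ n) * v‖ := by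
          congr 1; noncomm_ring
      _ ≤ ‖w ^ n‖ * ‖w - v‖ + ‖w ^ n - v ^ n‖ * ‖v‖ :=
          (norm_add_le _ _).trans (add_le_add (norm_mul_le _ _) (norm_mul_le _ _))
      _ ≤ 1 * ‖w - v‖ + (n * ‖w - v‖) * 1 := by
          gcongr
          · exact (norm_pow_le w n).trans (pow_le_one₀ (norm_nonneg w) hw)
          · exact norm_pow_sub_pow_le_nat_mul_norm_sub hw hv n
      _ = (n + 1 : ℕ) * ‖w - v‖ := by push_cast; ring

theorem norm_pow_sub_pow_sub_mul_le {w v : ℂ} (hw : ‖w‖ ≤ 1) (hv : ‖v‖ ≤ 1) (n : ℕ) :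
    ‖w ^ n - v ^ n - n * v ^ (n - 1) * (w - v)‖ ≤ n ^ 2 * ‖w - v‖ ^ 2 := by
  have hterm : ∀ k ∈ range n,
      w ^ k * v ^ (n - 1 - k) - v ^ (n - 1) = v ^ (n - 1 - k) * (w ^ k - v ^ k) := by
    intro k hk
    rw [mul_sub, ← pow_add, Nat.sub_add_cancel (by grind)]
    ring
  have hbound : ∀ k ∈ range n, ‖v ^ (n - 1 - k) * (w ^ k - v ^ k)‖ ≤ n * ‖w - v‖ := by
    intro k hk
    rw [norm_mul, norm_pow]
    calc ‖v‖ ^ (n - 1 - k) * ‖w ^ k - v ^ k‖ ≤ 1 * (k * ‖w - v‖) := by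
          gcongr
          · exact pow_le_one₀ (norm_nonneg v) hv
          · exact norm_pow_sub_pow_le_nat_mul_norm_sub hw hv k
      _ ≤ n * ‖w - v‖ := by
          rw [one_mul]; gcongr; exact_mod_cast (mem_range.1 hk).le
  calc ‖w ^ n - v ^ n - n * v ^ (n - 1) * (w - v)‖
      = ‖(∑ k ∈ range n, (w ^ k * v ^ (n - 1 - k) - v ^ (n - 1))) * (w - v)‖ := by
        rw [sum_sub_distrib, sum_const, card_range, nsmul_eq_mul, sub_mul, geom_sum₂_mul]
    _ = ‖∑ k ∈ range n, v ^ (n - 1 - k) * (w ^ k - v ^ k)‖ * ‖w - v‖ := by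
        rw [sum_congr rfl hterm, norm_mul]
    _ ≤ (∑ _k ∈ range n, n * ‖w - v‖) * ‖w - v‖ := by
        gcongr; exact (norm_sum_le _ _).trans (sum_le_sum hbound)
    _ = n ^ 2 * ‖w - v‖ ^ 2 := by rw [sum_const, card_range, nsmul_eq_mul]; ring

theorem tendsto_nat_mul_pow_sub_pow {w v : ℕ → ℂ} (hw : ∀ n, ‖w n‖ ≤ 1) (hv : ∀ n, ‖v n‖ ≤ 1)
    {c L : ℂ} (hc : Tendsto (fun n : ℕ => (n : ℂ) ^ 2 * (w n - v n)) atTop (𝓝 c))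
    (hv1 : Tendsto v atTop (𝓝 1)) (hL : Tendsto (fun n : ℕ => v n ^ n) atTop (𝓝 L)) :
    Tendsto (fun n : ℕ => (n : ℂ) * (w n ^ n - v n ^ n)) atTop (𝓝 (c * L)) := by
  have hL' : Tendsto (fun n : ℕ => v n ^ (n - 1)) atTop (𝓝 L) := by
    have hdiff : Tendsto (fun n : ℕ => v n ^ (n - 1) - v n ^ n) atTop (𝓝 0) := by
      refine squeeze_zero_norm' ?_ (by simpa using (hv1.const_sub 1).norm)
      filter_upwards [eventually_ge_atTop 1] with n hn
      obtain ⟨m, rfl⟩ := Nat.exists_eq_add_of_le' hn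
      calc ‖v (m + 1) ^ (m + 1 - 1) - v (m + 1) ^ (m + 1)‖
          = ‖v (m + 1)‖ ^ m * ‖1 - v (m + 1)‖ := by
            rw [Nat.add_sub_cancel, pow_succ, ← mul_one_sub, norm_mul, norm_pow]
        _ ≤ ‖1 - v (m + 1)‖ :=
            mul_le_of_le_one_left (norm_nonneg _) (pow_le_one₀ (norm_nonneg _) (hv _))
    simpa using hdiff.add hL
  -- the second-order remainder is `O(n³ ‖w n - v n‖²) = O(1 / n)`
  have hrem : Tendsto (fun n : ℕ => (n : ℂ) * (w n ^ n - v n ^ n - n * v n ^ (n - 1) * (w n - v n)))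
      atTop (𝓝 0) := by
    refine squeeze_zero_norm' ?_ ((hc.norm.pow 2).div_atTop tendsto_natCast_atTop_atTop)
    filter_upwards [eventually_gt_atTop 0] with n hn
    have hn' : (0 : ℝ) < n := by exact_mod_cast hn
    rw [norm_mul, Complex.norm_natCast, le_div_iff₀ hn', norm_mul, norm_pow, Complex.norm_natCast]
    calc n * ‖w n ^ n - v n ^ n - n * v n ^ (n - 1) * (w n - v n)‖ * n
        ≤ n * (n ^ 2 * ‖w n - v n‖ ^ 2) * n := by
          gcongr; exact norm_pow_sub_pow_sub_mul_le (hw n) (hv n) n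
      _ = (n ^ 2 * ‖w n - v n‖) ^ 2 := by ring
  simpa using ((hc.mul hL').add hrem).congr fun n => by ring

theorem norm_exp_le_one_of_re_nonpos {z : ℂ} (hz : z.re ≤ 0) : ‖exp z‖ ≤ 1 := by
  rw [Complex.norm_exp]; exact Real.exp_le_one_iff.2 hz

theorem re_mul_ofReal_nonpos {z : ℂ} (hz : z.re ≤ 0) {r : ℝ} (hr : 0 ≤ r) : (z * r).re ≤ 0 := by
  rw [Complex.re_mul_ofReal]; exact mul_nonpos_of_nonpos_of_nonneg hz hr

theorem re_div_natCast_nonpos {z : ℂ} (hz : z.re ≤ 0) (n : ℕ) : (z / n).re ≤ 0 := by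
  rw [Complex.div_natCast_re]; exact div_nonpos_of_nonpos_of_nonneg hz n.cast_nonneg

theorem norm_exp_mul_ofReal_le_one {ζ : ℂ} (hζ : ζ.re ≤ 0) {r : ℝ} (hr : 0 ≤ r) :
    ‖exp (ζ * r)‖ ≤ 1 :=
  norm_exp_le_one_of_re_nonpos (re_mul_ofReal_nonpos hζ hr)

theorem exp_div_natCast_pow {n : ℕ} (hn : n ≠ 0) (z : ℂ) : exp (z / n) ^ n = exp z := by
  rw [← Complex.exp_nat_mul]; congr 1; field_simp

theorem norm_exp_sub_one_sub_id_sub_sq_div_two_le {z : ℂ} (hz : ‖z‖ ≤ 1) :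
    ‖exp z - 1 - z - z ^ 2 / 2‖ ≤ ‖z‖ ^ 3 := by
  have h := Complex.exp_bound hz (n := 3) (by norm_num)
  norm_num [sum_range_succ, Nat.factorial] at h
  calc ‖exp z - 1 - z - z ^ 2 / 2‖ = ‖exp z - (1 + z + z ^ 2 / 2)‖ := by ring_nf
    _ ≤ ‖z‖ ^ 3 * (2 / 9) := by simpa using h
    _ ≤ ‖z‖ ^ 3 := by nlinarith [pow_nonneg (norm_nonneg z) 3]

theorem tendsto_sq_mul_exp_div_sub_one_sub (z : ℂ) :
    Tendsto (fun n : ℕ => (n : ℂ) ^ 2 * (exp (z / n) - 1 - z / n)) atTop (𝓝 (z ^ 2 / 2)) := by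
  have hbound : ∀ᶠ n : ℕ in atTop,
      ‖(n : ℂ) ^ 2 * (exp (z / n) - 1 - z / n) - z ^ 2 / 2‖ ≤ ‖z‖ ^ 3 / n := by
    filter_upwards [eventually_ge_atTop ⌈‖z‖⌉₊, eventually_gt_atTop 0] with n hzn hn
    have hn' : (0 : ℝ) < n := by exact_mod_cast hn
    have hn0 : (n : ℂ) ≠ 0 := by exact_mod_cast hn.ne'
    have hsmall : ‖z / n‖ ≤ 1 := by
      rw [norm_div, Complex.norm_natCast, div_le_one hn']; exact Nat.ceil_le.1 hzn
    calc ‖(n : ℂ) ^ 2 * (exp (z / n) - 1 - z / n) - z ^ 2 / 2‖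
        = n ^ 2 * ‖exp (z / n) - 1 - z / n - (z / n) ^ 2 / 2‖ := by
          rw [← Complex.norm_natCast, ← norm_pow, ← norm_mul]
          congr 1; field_simp
      _ ≤ n ^ 2 * ‖z / n‖ ^ 3 := by gcongr; exact norm_exp_sub_one_sub_id_sub_sq_div_two_le hsmall
      _ = ‖z‖ ^ 3 / n := by rw [norm_div, Complex.norm_natCast]; field_simp
  exact tendsto_sub_nhds_zero_iff.mp
    (squeeze_zero_norm' hbound (tendsto_const_div_atTop_nhds_zero_nat _))

-- `bernoulliExp t y = 𝔼[exp (t B)]` for a Bernoulli variable `B` of parameter `y`, so that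
-- `bernoulliExp (ζ / n) y ^ n = 𝔼[exp (ζ S / n)]` for `S` binomial with parameters `n, y`.
noncomputable def bernoulliExp (t : ℂ) (y : ℝ) : ℂ := 1 + (exp t - 1) * y

theorem norm_bernoulliExp_le_one {t : ℂ} (ht : t.re ≤ 0) {y : ℝ} (hy : y ∈ Set.Icc 0 1) :
    ‖bernoulliExp t y‖ ≤ 1 := by
  calc ‖bernoulliExp t y‖ = ‖((1 - y : ℝ) : ℂ) + (y : ℂ) * exp t‖ := by
        unfold bernoulliExp; push_cast; ring_nf
    _ ≤ (1 - y) + y * 1 := by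
        refine (norm_add_le _ _).trans (add_le_add ?_ ?_)
        · rw [Complex.norm_real, Real.norm_of_nonneg (by linarith [hy.2])]
        · rw [norm_mul, Complex.norm_real, Real.norm_of_nonneg hy.1]
          exact mul_le_mul_of_nonneg_left (norm_exp_le_one_of_re_nonpos ht) hy.1
    _ = 1 := by ring

section BernoulliExp

variable {ζ : ℂ} {y : ℝ}

theorem bernoulliExp_sub_exp (n : ℕ) :
    bernoulliExp (ζ / n) y - exp (ζ * y / n)
      = y * (exp (ζ / n) - 1 - ζ / n) - (exp (ζ * y / n) - 1 - ζ * y / n) := by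
  unfold bernoulliExp; ring

theorem norm_bernoulliExp_div_le_one (hζ : ζ.re ≤ 0) (hy : y ∈ Set.Icc 0 1) (n : ℕ) :
    ‖bernoulliExp (ζ / n) y‖ ≤ 1 :=
  norm_bernoulliExp_le_one (re_div_natCast_nonpos hζ n) hy

theorem norm_exp_mul_div_le_one (hζ : ζ.re ≤ 0) (hy : 0 ≤ y) (n : ℕ) :
    ‖exp (ζ * y / n)‖ ≤ 1 :=
  norm_exp_le_one_of_re_nonpos (re_div_natCast_nonpos (re_mul_ofReal_nonpos hζ hy) n)

theorem tendsto_nat_mul_bernoulliExp_pow_sub (hζ : ζ.re ≤ 0) (hy : y ∈ Set.Icc 0 1) :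
    Tendsto (fun n : ℕ => (n : ℂ) * (bernoulliExp (ζ / n) y ^ n - exp (ζ * y))) atTop
      (𝓝 (ζ ^ 2 * (y - y ^ 2) / 2 * exp (ζ * y))) := by
  have hc : Tendsto (fun n : ℕ => (n : ℂ) ^ 2 * (bernoulliExp (ζ / n) y - exp (ζ * y / n)))
      atTop (𝓝 (y * (ζ ^ 2 / 2) - (ζ * y) ^ 2 / 2)) :=
    (((tendsto_sq_mul_exp_div_sub_one_sub ζ).const_mul (y : ℂ)).sub
      (tendsto_sq_mul_exp_div_sub_one_sub (ζ * y))).congr fun n => by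
        rw [bernoulliExp_sub_exp]; ring
  have hv1 : Tendsto (fun n : ℕ => exp (ζ * y / n)) atTop (𝓝 1) := by
    simpa using (tendsto_const_div_atTop_nhds_zero_nat (ζ * y)).cexp
  have hL : Tendsto (fun n : ℕ => exp (ζ * y / n) ^ n) atTop (𝓝 (exp (ζ * y))) :=
    tendsto_const_nhds.congr' <| (eventually_ne_atTop 0).mono fun n hn =>
      (exp_div_natCast_pow hn _).symm
  have hlim := tendsto_nat_mul_pow_sub_pow (norm_bernoulliExp_div_le_one hζ hy)
    (norm_exp_mul_div_le_one hζ hy.1) hc hv1 hL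
  rw [show (y * (ζ ^ 2 / 2) - (ζ * y) ^ 2 / 2) * exp (ζ * y)
    = ζ ^ 2 * (y - y ^ 2) / 2 * exp (ζ * y) by ring] at hlim
  refine hlim.congr' ((eventually_ne_atTop 0).mono fun n hn => ?_)
  rw [exp_div_natCast_pow hn]

theorem nat_mul_norm_bernoulliExp_pow_sub_le (hζ : ζ.re ≤ 0) (hy : y ∈ Set.Icc 0 1) (n : ℕ) :
    n * ‖bernoulliExp (ζ / n) y ^ n - exp (ζ * y)‖ ≤ 2 * ‖ζ‖ + 2 * ‖ζ‖ ^ 2 := by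
  rcases eq_or_ne n 0 with rfl | hn
  · simp; positivity
  have hn' : (0 : ℝ) < n := by positivity
  have hw := norm_bernoulliExp_div_le_one hζ hy n
  have hv := norm_exp_mul_div_le_one hζ hy.1 n
  rw [← exp_div_natCast_pow hn (ζ * y)]
  rcases le_or_gt (n : ℝ) ‖ζ‖ with hsmall | hlarge
  · calc n * ‖bernoulliExp (ζ / n) y ^ n - exp (ζ * y / n) ^ n‖ ≤ ‖ζ‖ * (1 + 1) := by
          refine mul_le_mul hsmall ((norm_sub_le _ _).trans (add_le_add ?_ ?_))
            (norm_nonneg _) (norm_nonneg _) <;>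
          exact (norm_pow_le _ n).trans (pow_le_one₀ (norm_nonneg _) ‹_›)
      _ ≤ 2 * ‖ζ‖ + 2 * ‖ζ‖ ^ 2 := by nlinarith [sq_nonneg ‖ζ‖]
  have h1 : ‖ζ / n‖ ≤ 1 := by rw [norm_div, Complex.norm_natCast, div_le_one hn']; exact hlarge.le
  have h2 : ‖ζ * y / n‖ ≤ ‖ζ / n‖ := by
    rw [mul_div_right_comm, norm_mul, Complex.norm_real, Real.norm_of_nonneg hy.1]
    exact mul_le_of_le_one_right (norm_nonneg _) hy.2
  have hwv : ‖bernoulliExp (ζ / n) y - exp (ζ * y / n)‖ ≤ 2 * ‖ζ / n‖ ^ 2 := by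
    rw [bernoulliExp_sub_exp]
    refine (norm_sub_le _ _).trans ?_
    rw [norm_mul, Complex.norm_real, Real.norm_of_nonneg hy.1]
    have hA := norm_exp_sub_one_sub_id_le h1
    have hB := (norm_exp_sub_one_sub_id_le (h2.trans h1)).trans
      (pow_le_pow_left₀ (norm_nonneg _) h2 2)
    nlinarith [hy.1, hy.2, norm_nonneg (exp (ζ / n) - 1 - ζ / n)]
  calc n * ‖bernoulliExp (ζ / n) y ^ n - exp (ζ * y / n) ^ n‖
      ≤ n * (n * (2 * ‖ζ / n‖ ^ 2)) := by
        gcongr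
        exact (norm_pow_sub_pow_le_nat_mul_norm_sub hw hv n).trans (by gcongr)
    _ = 2 * ‖ζ‖ ^ 2 := by rw [norm_div, Complex.norm_natCast]; field_simp
    _ ≤ 2 * ‖ζ‖ + 2 * ‖ζ‖ ^ 2 := by linarith [norm_nonneg ζ]

end BernoulliExp

theorem tendsto_nat_mul_integral_bernoulliExp_pow_sub {μ : Measure ℝ}
    (hμ : ∀ᵐ y ∂μ, y ∈ Set.Icc (0 : ℝ) 1) {ζ : ℂ} (hζ : ζ.re ≤ 0) {χ : ℝ → ℂ}
    (hχ : Integrable χ μ) :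
    Tendsto (fun n : ℕ => (n : ℂ) * ∫ y, (bernoulliExp (ζ / n) y ^ n - exp (ζ * y)) * χ y ∂μ)
      atTop (𝓝 (∫ y, ζ ^ 2 * (y - y ^ 2) / 2 * exp (ζ * y) * χ y ∂μ)) := by
  simp_rw [← integral_const_mul, ← mul_assoc]
  refine tendsto_integral_of_dominated_convergence (fun y => (2 * ‖ζ‖ + 2 * ‖ζ‖ ^ 2) * ‖χ y‖)
    (fun n => ?_) (hχ.norm.const_mul _) (fun n => ?_) ?_
  · exact (Continuous.aestronglyMeasurable (by unfold bernoulliExp; fun_prop)).mul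
      hχ.aestronglyMeasurable
  · filter_upwards [hμ] with y hy
    rw [norm_mul, norm_mul, Complex.norm_natCast]
    exact mul_le_mul_of_nonneg_right (nat_mul_norm_bernoulliExp_pow_sub_le hζ hy n)
      (norm_nonneg _)
  · filter_upwards [hμ] with y hy
    exact (tendsto_nat_mul_bernoulliExp_pow_sub hζ hy).mul_const (χ y)

noncomputable def empiricalCdf (X : ℕ → ℝ) (n : ℕ) (x : ℝ) : ℝ :=
  (1 / (n : ℝ)) * ∑ k ∈ range n, if X (k + 1) ≤ x then (1 : ℝ) else 0

theorem empiricalCdf_nonneg (X : ℕ → ℝ) (n : ℕ) (x : ℝ) : 0 ≤ empiricalCdf X n x := by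
  unfold empiricalCdf; positivity

theorem exp_mul_empiricalCdf (ζ : ℂ) (X : ℕ → ℝ) (n : ℕ) (x : ℝ) :
    exp (ζ * empiricalCdf X n x) = ∏ k : Fin n, if X (k + 1) ≤ x then exp (ζ / n) else 1 := by
  rw [Fin.prod_univ_eq_prod_range (fun k => if X (k + 1) ≤ x then exp (ζ / n) else 1)]
  calc exp (ζ * empiricalCdf X n x)
      = exp (∑ k ∈ range n, if X (k + 1) ≤ x then ζ / n else 0) := by
        unfold empiricalCdf; push_cast
        rw [← mul_assoc, mul_sum]
        refine congrArg exp (sum_congr rfl fun k _ => ?_)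
        split_ifs <;> simp [div_eq_mul_inv]
    _ = ∏ k ∈ range n, if X (k + 1) ≤ x then exp (ζ / n) else 1 := by
        rw [Complex.exp_sum]; exact prod_congr rfl fun k _ => by split_ifs <;> simp

theorem integral_ite_le_exp {μ : Measure ℝ} [IsProbabilityMeasure μ] (a : ℂ) (y : ℝ) :
    ∫ u, (if u ≤ y then exp a else 1) ∂μ = bernoulliExp a (μ.real (Set.Iic y)) := by
  have h : (fun u => if u ≤ y then exp a else 1)
      = fun u => 1 + (Set.Iic y).indicator (fun _ => exp a - 1) u := by
    ext u; by_cases hu : u ≤ y <;> simp [hu]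
  rw [h, integral_add (integrable_const _) ((integrable_const _).indicator measurableSet_Iic),
    integral_const, integral_indicator_const _ measurableSet_Iic]
  simp [bernoulliExp, Complex.real_smul, mul_comm]

theorem measureReal_restrict_Icc_Iic {y : ℝ} (hy : y ∈ Set.Icc (0 : ℝ) 1) :
    (volume.restrict (Set.Icc (0 : ℝ) 1)).real (Set.Iic y) = y := by
  have hinter : Set.Iic y ∩ Set.Icc 0 1 = Set.Icc 0 y := by
    ext u; simp only [Set.mem_inter_iff, Set.mem_Iic, Set.mem_Icc]; grind
  rw [measureReal_restrict_apply measurableSet_Iic, hinter, Real.volume_real_Icc_of_le hy.1,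
    sub_zero]

theorem map_head_tail_eq_prod_pi {Ω α : Type*} [MeasurableSpace Ω] [MeasurableSpace α]
    {P : Measure Ω} {μ : Measure α} {W : ℕ → Ω → α} (hmeas : ∀ i, Measurable (W i))
    (hindep : iIndepFun W P) (hlaw : ∀ i, P.map (W i) = μ) (n : ℕ) :
    P.map (fun ω => (W 0 ω, fun k : Fin n => W (k + 1) ω)) = μ.prod (Measure.pi fun _ => μ) := by
  have := hindep.isProbabilityMeasure
  have : IsProbabilityMeasure μ := hlaw 0 ▸ Measure.isProbabilityMeasure_map (hmeas 0).aemeasurable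
  have hpi : P.map (fun ω (i : Fin (n + 1)) => W i ω) = Measure.pi fun _ => μ := by
    rw [iIndepFun.map_fun_eq_pi_map (fun i : Fin (n + 1) => (hmeas i).aemeasurable)
      (hindep.precomp Fin.val_injective)]
    simp only [hlaw]
  rw [← (measurePreserving_piFinSuccAbove (fun _ : Fin (n + 1) => μ) 0).map_eq, ← hpi,
    Measure.map_map (MeasurableEquiv.measurable _)
      (measurable_pi_lambda (fun ω (i : Fin (n + 1)) => W i ω) fun i => hmeas i)]
  rfl

section EmpiricalCdf

variable {Ω : Type*} [MeasurableSpace Ω] {P : Measure Ω} {μ : Measure ℝ} {W : ℕ → Ω → ℝ}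

theorem measurable_empiricalCdf (hmeas : ∀ i, Measurable (W i)) (n : ℕ) :
    Measurable fun ω => empiricalCdf (W · ω) n (W 0 ω) := by
  unfold empiricalCdf
  exact (Finset.measurable_sum _ fun k _ => Measurable.ite (measurableSet_le (hmeas _) (hmeas 0))
    measurable_const measurable_const).const_mul _

theorem integral_exp_mul_empiricalCdf_mul (hmeas : ∀ i, Measurable (W i))
    (hindep : iIndepFun W P) (hlaw : ∀ i, P.map (W i) = μ) {ζ : ℂ} (hζ : ζ.re ≤ 0)
    {χ : ℝ → ℂ} (hχ : Integrable χ μ) (n : ℕ) :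
    ∫ ω, exp (ζ * empiricalCdf (W · ω) n (W 0 ω)) * χ (W 0 ω) ∂P
      = ∫ y, bernoulliExp (ζ / n) (μ.real (Set.Iic y)) ^ n * χ y ∂μ := by
  have : IsProbabilityMeasure μ :=
    have := hindep.isProbabilityMeasure
    hlaw 0 ▸ Measure.isProbabilityMeasure_map (hmeas 0).aemeasurable
  set g : ℝ → ℝ → ℂ := fun y u => if u ≤ y then exp (ζ / n) else 1 with hg
  set G : ℝ × (Fin n → ℝ) → ℂ := fun x => (∏ k, g x.1 (x.2 k)) * χ x.1 with hG
  have hnorm_g : ∀ y u, ‖g y u‖ ≤ 1 := by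
    intro y u; simp only [hg]; split_ifs
    · exact norm_exp_le_one_of_re_nonpos (re_div_natCast_nonpos hζ n)
    · simp
  have hGint : Integrable G (μ.prod (Measure.pi fun _ => μ)) := by
    refine (hχ.comp_fst _).bdd_mul (c := 1) ?_ (ae_of_all _ fun x => ?_)
    · exact (Finset.measurable_prod _ fun k _ => Measurable.ite
        (measurableSet_le (by fun_prop) measurable_fst) measurable_const
          measurable_const).aestronglyMeasurable
    · rw [norm_prod]; exact prod_le_one (fun _ _ => norm_nonneg _) fun k _ => hnorm_g _ _
  have hlaw_pair := map_head_tail_eq_prod_pi hmeas hindep hlaw n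
  calc ∫ ω, exp (ζ * empiricalCdf (W · ω) n (W 0 ω)) * χ (W 0 ω) ∂P
      = ∫ ω, G (W 0 ω, fun k : Fin n => W (k + 1) ω) ∂P := by
        simp only [hG, hg, exp_mul_empiricalCdf]
    _ = ∫ x, G x ∂(μ.prod (Measure.pi fun _ => μ)) := by
        rw [← hlaw_pair, integral_map ((hmeas 0).prodMk
          (measurable_pi_lambda _ fun k => hmeas _)).aemeasurable
          (hlaw_pair ▸ hGint.aestronglyMeasurable)]
    _ = ∫ y, (∫ u, g y u ∂μ) ^ n * χ y ∂μ := by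
        rw [integral_prod _ hGint]
        simp only [hG, integral_mul_const, integral_fintype_prod_eq_pow, Fintype.card_fin]
    _ = ∫ y, bernoulliExp (ζ / n) (μ.real (Set.Iic y)) ^ n * χ y ∂μ := by
        simp only [hg, integral_ite_le_exp]

theorem integral_exp_empiricalCdf_sub_mul_of_uniform (hmeas : ∀ i, Measurable (W i))
    (hindep : iIndepFun W P)
    (hunif : ∀ i, P.map (W i) = volume.restrict (Set.Icc (0 : ℝ) 1)) {ζ : ℂ} (hζ : ζ.re ≤ 0)
    {χ : ℝ → ℂ} (hχ : Integrable χ (volume.restrict (Set.Icc (0 : ℝ) 1))) (n : ℕ) :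
    ∫ ω, (exp (ζ * empiricalCdf (W · ω) n (W 0 ω)) - exp (ζ * W 0 ω)) * χ (W 0 ω) ∂P
      = ∫ y in Set.Icc (0 : ℝ) 1, (bernoulliExp (ζ / n) y ^ n - exp (ζ * y)) * χ y := by
  have hμ : ∀ᵐ y ∂(volume.restrict (Set.Icc (0 : ℝ) 1)), y ∈ Set.Icc (0 : ℝ) 1 :=
    ae_restrict_mem measurableSet_Icc
  have hχW : Integrable (fun ω => χ (W 0 ω)) P := (hunif 0 ▸ hχ).comp_measurable (hmeas 0)
  have hexpχ : Integrable (fun y : ℝ => exp (ζ * y) * χ y) (volume.restrict (Set.Icc (0 : ℝ) 1)) :=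
    hχ.bdd_mul (c := 1) (by fun_prop) (hμ.mono fun y hy => norm_exp_mul_ofReal_le_one hζ hy.1)
  have hempirical :
      Integrable (fun ω => exp (ζ * empiricalCdf (W · ω) n (W 0 ω)) * χ (W 0 ω)) P := by
    have := measurable_empiricalCdf hmeas n
    exact hχW.bdd_mul (c := 1)
      (by fun_prop : Measurable fun ω =>
        exp (ζ * empiricalCdf (W · ω) n (W 0 ω))).aestronglyMeasurable
      (ae_of_all _ fun ω => norm_exp_mul_ofReal_le_one hζ (empiricalCdf_nonneg _ n _))
  have hbernoulli : Integrable (fun y : ℝ => bernoulliExp (ζ / n) y ^ n * χ y)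
      (volume.restrict (Set.Icc (0 : ℝ) 1)) :=
    hχ.bdd_mul (c := 1) (by unfold bernoulliExp; fun_prop) (hμ.mono fun y hy =>
      (norm_pow_le _ n).trans (pow_le_one₀ (norm_nonneg _) (norm_bernoulliExp_div_le_one hζ hy n)))
  have hexp_W : ∫ ω, exp (ζ * W 0 ω) * χ (W 0 ω) ∂P
      = ∫ y in Set.Icc (0 : ℝ) 1, exp (ζ * y) * χ y := by
    rw [← hunif 0, integral_map (hmeas 0).aemeasurable (hunif 0 ▸ hexpχ.aestronglyMeasurable)]
  calc ∫ ω, (exp (ζ * empiricalCdf (W · ω) n (W 0 ω)) - exp (ζ * W 0 ω)) * χ (W 0 ω) ∂P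
      = (∫ ω, exp (ζ * empiricalCdf (W · ω) n (W 0 ω)) * χ (W 0 ω) ∂P)
          - ∫ ω, exp (ζ * W 0 ω) * χ (W 0 ω) ∂P := by
        simp_rw [sub_mul]
        exact integral_sub hempirical ((hunif 0 ▸ hexpχ).comp_measurable (hmeas 0))
    _ = (∫ y in Set.Icc (0 : ℝ) 1, bernoulliExp (ζ / n) y ^ n * χ y)
          - ∫ y in Set.Icc (0 : ℝ) 1, exp (ζ * y) * χ y := by
        rw [integral_exp_mul_empiricalCdf_mul hmeas hindep hunif hζ hχ, hexp_W]
        congr 1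
        exact integral_congr_ae (hμ.mono fun y hy => by simp only [measureReal_restrict_Icc_Iic hy])
    _ = ∫ y in Set.Icc (0 : ℝ) 1, (bernoulliExp (ζ / n) y ^ n - exp (ζ * y)) * χ y := by
        rw [← integral_sub hbernoulli hexpχ]; simp_rw [sub_mul]

end EmpiricalCdf

theorem stmt7_general
    {Ω : Type*} [MeasurableSpace Ω]
    (P : Measure Ω)
    (W : ℕ → Ω → ℝ) (hmeas : ∀ i, Measurable (W i))
    (hindep : iIndepFun W P)
    (hunif : ∀ i, P.map (W i) = volume.restrict (Set.Icc (0:ℝ) 1))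
    (Yn : ℕ → Ω → ℝ)
    (hYn : ∀ n ω, Yn n ω =
      (1 / (n : ℝ)) * ∑ k ∈ Finset.range n, (if W (k+1) ω ≤ W 0 ω then (1:ℝ) else 0))
    (p q : ℤ) :
    (∫ ω, (((W 0 ω - (W 0 ω)^2) / 2 : ℝ) : ℂ) *
        (-(((2 * Real.pi * (p:ℝ))^2 : ℝ) : ℂ)) *
        Complex.exp (2 * Real.pi * Complex.I * (p:ℂ) * ((W 0 ω : ℝ) : ℂ)) *
        Complex.exp (2 * Real.pi * Complex.I * (q:ℂ) * ((W 0 ω : ℝ) : ℂ)) ∂P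
      = ∫ y in Set.Icc (0:ℝ) 1,
          ((-((y - y^2) / 2) * (2 * Real.pi * (p:ℝ))^2 : ℝ) : ℂ) *
            Complex.exp (2 * Real.pi * Complex.I * ((p:ℂ) + (q:ℂ)) * (y : ℂ))) ∧
    Tendsto (fun n : ℕ => (n : ℂ) * ∫ ω,
        (Complex.exp (2 * Real.pi * Complex.I * (p:ℂ) * ((Yn n ω : ℝ) : ℂ))
          - Complex.exp (2 * Real.pi * Complex.I * (p:ℂ) * ((W 0 ω : ℝ) : ℂ))) *
        Complex.exp (2 * Real.pi * Complex.I * (q:ℂ) * ((W 0 ω : ℝ) : ℂ)) ∂P) atTop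
      (nhds (∫ y in Set.Icc (0:ℝ) 1,
          ((-((y - y^2) / 2) * (2 * Real.pi * (p:ℝ))^2 : ℝ) : ℂ) *
            Complex.exp (2 * Real.pi * Complex.I * ((p:ℂ) + (q:ℂ)) * (y : ℂ)))) := by
  obtain rfl : Yn = fun n ω => empiricalCdf (W · ω) n (W 0 ω) := funext₂ hYn
  set ζ : ℂ := 2 * Real.pi * Complex.I * p
  set ξ : ℂ := 2 * Real.pi * Complex.I * q
  have hζ : ζ.re ≤ 0 := by simp [ζ]
  have hχ : Integrable (fun y : ℝ => exp (ξ * y)) (volume.restrict (Set.Icc (0 : ℝ) 1)) :=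
    (by fun_prop : Continuous fun y : ℝ => exp (ξ * y)).integrableOn_Icc
  have hζ_sq : ζ ^ 2 = -((2 * Real.pi * p : ℝ) : ℂ) ^ 2 := by
    simp only [ζ]; push_cast; ring_nf; rw [I_sq]; ring
  have hlimit : ∀ y : ℝ, ζ ^ 2 * (y - y ^ 2) / 2 * exp (ζ * y) * exp (ξ * y)
      = ((-((y - y ^ 2) / 2) * (2 * Real.pi * p) ^ 2 : ℝ) : ℂ)
        * exp (2 * Real.pi * Complex.I * (p + q) * y) := by
    intro y
    rw [mul_assoc _ (exp _), ← Complex.exp_add, hζ_sq,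
      show ζ * y + ξ * y = 2 * Real.pi * Complex.I * (p + q) * y by ring]
    push_cast; ring
  refine ⟨?_, ?_⟩
  · rw [← hunif 0, integral_map (hmeas 0).aemeasurable (by fun_prop)]
    refine integral_congr_ae (ae_of_all _ fun ω => ?_)
    dsimp only
    rw [← hlimit, hζ_sq]; push_cast; ring
  · have hlim := tendsto_nat_mul_integral_bernoulliExp_pow_sub
      (ae_restrict_mem measurableSet_Icc) hζ hχ
    simp only [hlimit] at hlim
    refine hlim.congr fun n => ?_
    rw [integral_exp_empiricalCdf_sub_mul_of_uniform hmeas hindep hunif hζ hχ n]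

theorem stmt7
    {Ω : Type*} [MeasurableSpace Ω]
    (P : Measure Ω) [IsProbabilityMeasure P]
    (W : ℕ → Ω → ℝ) (hmeas : ∀ i, Measurable (W i))
    (hindep : iIndepFun W P)
    (hunif : ∀ i, P.map (W i) = volume.restrict (Set.Icc (0:ℝ) 1))
    (Yn : ℕ → Ω → ℝ)
    (hYn : ∀ n ω, Yn n ω =
      (1 / (n : ℝ)) * ∑ k ∈ Finset.range n, (if W (k+1) ω ≤ W 0 ω then (1:ℝ) else 0))
    (p q : ℤ) :
    (∫ ω, (((W 0 ω - (W 0 ω)^2) / 2 : ℝ) : ℂ) *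
        (-(((2 * Real.pi * (p:ℝ))^2 : ℝ) : ℂ)) *
        Complex.exp (2 * Real.pi * Complex.I * (p:ℂ) * ((W 0 ω : ℝ) : ℂ)) *
        Complex.exp (2 * Real.pi * Complex.I * (q:ℂ) * ((W 0 ω : ℝ) : ℂ)) ∂P
      = ∫ y in Set.Icc (0:ℝ) 1,
          ((-((y - y^2) / 2) * (2 * Real.pi * (p:ℝ))^2 : ℝ) : ℂ) *
            Complex.exp (2 * Real.pi * Complex.I * ((p:ℂ) + (q:ℂ)) * (y : ℂ))) ∧
    Tendsto (fun n : ℕ => (n : ℂ) * ∫ ω,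
        (Complex.exp (2 * Real.pi * Complex.I * (p:ℂ) * ((Yn n ω : ℝ) : ℂ))
          - Complex.exp (2 * Real.pi * Complex.I * (p:ℂ) * ((W 0 ω : ℝ) : ℂ))) *
        Complex.exp (2 * Real.pi * Complex.I * (q:ℂ) * ((W 0 ω : ℝ) : ℂ)) ∂P) atTop
      (nhds (∫ y in Set.Icc (0:ℝ) 1,
          ((-((y - y^2) / 2) * (2 * Real.pi * (p:ℝ))^2 : ℝ) : ℂ) *
            Complex.exp (2 * Real.pi * Complex.I * ((p:ℂ) + (q:ℂ)) * (y : ℂ)))) :=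
  stmt7_general P W hmeas hindep hunif Yn hYn p q
end

section
/- Let (Y,Z,T) be real random variables with Z, T square integrable, G a real random variable independent of (Y,Z,T) with E[G]=0, E[G²]=1, and Y_ε = Y + εZ + √ε·T·G. Then for every φ ∈ C²_b(ℝ) and every bounded measurable χ, (1/ε) E[(φ(Y_ε) − φ(Y)) χ(Y)] → E[Z φ'(Y) χ(Y)] + (1/2) E[T² φ''(Y) χ(Y)] as ε → 0⁺. -/
/-!
Expand `φ` to second order around `Y`. The increment `h = εZ + √ε TG` has `h² / ε → (TG)²`, so
the only term not of order `ε` is the first-order one `√ε TG φ'(Y)`, and it has mean zero because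
`G` is centred and independent of `(Y, Z, T)`. After subtracting it, the quotient by `ε` converges
pointwise to `Z φ'(Y) + (TG)²/2 φ''(Y)` and for `ε ≤ 1` is dominated by a multiple of
`Z² + (TG)² + |Z|`, which is integrable since independence puts `TG` in `L²`. Dominated convergence
gives the limit, and `E[(TG)² ψ(Y)] = E[G²] E[T² ψ(Y)] = E[T² ψ(Y)]` for `ψ = φ'' χ`.
-/

open MeasureTheory ProbabilityTheory Filter Topology Asymptotics

section Taylor

variable {φ : ℝ → ℝ}

lemma isLittleO_taylor_two (hφ : ContDiff ℝ 2 φ) (a : ℝ) :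
    (fun x => φ x - φ a - (x - a) * deriv φ a - (x - a) ^ 2 / 2 * deriv (deriv φ) a)
      =o[𝓝 a] fun x => (x - a) ^ 2 := by
  refine (taylor_isLittleO_univ (x₀ := a) (n := 2) (by exact_mod_cast hφ)).congr_left fun x => ?_
  simp only [taylorWithinEval_succ, taylor_within_apply, zero_add, Finset.range_one,
    iteratedDerivWithin_univ, smul_eq_mul, Finset.sum_singleton, Nat.factorial_zero, Nat.cast_one,
    inv_one, pow_zero, mul_one, iteratedDeriv_zero, one_mul, CharP.cast_eq_zero, pow_one,
    iteratedDeriv_succ, Nat.factorial_one, Nat.reduceAdd]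
  ring

lemma abs_sub_sub_mul_deriv_le {C : ℝ} (hφ : ContDiff ℝ 2 φ)
    (hC : ∀ x, |deriv (deriv φ) x| ≤ C) (a x : ℝ) :
    |φ x - φ a - (x - a) * deriv φ a| ≤ C * (x - a) ^ 2 := by
  have hφ' : Differentiable ℝ (deriv φ) :=
    (hφ.iterate_deriv' 1 1).differentiable one_ne_zero
  have hC0 : 0 ≤ C := (abs_nonneg _).trans (hC a)
  have hderiv : ∀ y, HasDerivAt (fun y => φ y - (y - a) * deriv φ a) (deriv φ y - deriv φ a) y :=
    fun y => by
      simpa using ((hφ.differentiable two_ne_zero) y).hasDerivAt.fun_sub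
        (((hasDerivAt_id y).sub_const a).mul_const (deriv φ a))
  have hbound : ∀ y ∈ Metric.closedBall a |x - a|, ‖deriv φ y - deriv φ a‖ ≤ C * |x - a| :=
    fun y hy => calc
      ‖deriv φ y - deriv φ a‖ ≤ C * ‖y - a‖ :=
        convex_univ.norm_image_sub_le_of_norm_deriv_le (fun z _ => hφ' z) (fun z _ => hC z)
          trivial trivial
      _ ≤ C * |x - a| := mul_le_mul_of_nonneg_left hy hC0
  have := convex_closedBall a |x - a| |>.norm_image_sub_le_of_norm_hasDerivWithin_le
    (fun y _ => (hderiv y).hasDerivWithinAt) hbound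
    (Metric.mem_closedBall_self (abs_nonneg _)) (Metric.mem_closedBall.2 le_rfl)
  simpa [Real.norm_eq_abs, mul_assoc, ← sq, sub_right_comm _ (φ a)] using this

end Taylor

lemma sq_perturbation_le {ε : ℝ} (hε0 : 0 ≤ ε) (hε1 : ε ≤ 1) (z w : ℝ) :
    (ε * z + √ε * w) ^ 2 ≤ 2 * ε * (z ^ 2 + w ^ 2) := by
  have hεz : ε ^ 2 * z ^ 2 ≤ ε * z ^ 2 := by
    nlinarith [mul_nonneg hε0 (sub_nonneg.2 hε1), sq_nonneg z]
  calc (ε * z + √ε * w) ^ 2 ≤ 2 * ((ε * z) ^ 2 + (√ε * w) ^ 2) := add_sq_le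
    _ = 2 * (ε ^ 2 * z ^ 2 + ε * w ^ 2) := by rw [mul_pow, mul_pow, Real.sq_sqrt hε0]
    _ ≤ 2 * ε * (z ^ 2 + w ^ 2) := by nlinarith

lemma tendsto_sq_perturbation_div (z w : ℝ) :
    Tendsto (fun ε => (ε * z + √ε * w) ^ 2 / ε) (𝓝[>] 0) (𝓝 (w ^ 2)) := by
  have hcont : Continuous fun ε : ℝ => ε * z ^ 2 + 2 * √ε * z * w + w ^ 2 := by fun_prop
  have hlim : Tendsto (fun ε : ℝ => ε * z ^ 2 + 2 * √ε * z * w + w ^ 2) (𝓝[>] 0) (𝓝 (w ^ 2)) := by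
    simpa using (hcont.continuousWithinAt (s := Set.Ioi 0) (x := 0)).tendsto
  refine hlim.congr' ?_
  filter_upwards [self_mem_nhdsWithin] with ε (hε : 0 < ε)
  rw [eq_div_iff hε.ne']
  linear_combination -w ^ 2 * Real.sq_sqrt hε.le

/-- The first-order term `√ε w φ'(a)` is removed: it is not `O(ε)`, but it has mean zero once
`w = T G`. -/
noncomputable def perturbationQuotient (φ : ℝ → ℝ) (a z w ε : ℝ) : ℝ :=
  (φ (a + ε * z + √ε * w) - φ a - √ε * w * deriv φ a) / ε

section PerturbationQuotient

variable {φ : ℝ → ℝ}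

lemma perturbationQuotient_eq (a z w : ℝ) {ε : ℝ} (hε : ε ≠ 0) :
    perturbationQuotient φ a z w ε
      = (φ (a + ε * z + √ε * w) - φ a - (ε * z + √ε * w) * deriv φ a) / ε + z * deriv φ a := by
  rw [perturbationQuotient]
  field_simp
  ring

lemma abs_perturbationQuotient_le {C₁ C₂ : ℝ} (hφ : ContDiff ℝ 2 φ)
    (hC₁ : ∀ x, |deriv φ x| ≤ C₁) (hC₂ : ∀ x, |deriv (deriv φ) x| ≤ C₂) (a z w : ℝ) {ε : ℝ}
    (hε0 : 0 < ε) (hε1 : ε ≤ 1) :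
    |perturbationQuotient φ a z w ε| ≤ 2 * C₂ * (z ^ 2 + w ^ 2) + C₁ * |z| := by
  have hC₂0 : 0 ≤ C₂ := (abs_nonneg _).trans (hC₂ a)
  have hR := abs_sub_sub_mul_deriv_le hφ hC₂ a (a + ε * z + √ε * w)
  rw [show a + ε * z + √ε * w - a = ε * z + √ε * w by ring] at hR
  rw [perturbationQuotient_eq a z w hε0.ne']
  calc _ ≤ |(φ (a + ε * z + √ε * w) - φ a - (ε * z + √ε * w) * deriv φ a) / ε|
          + |z * deriv φ a| := abs_add_le _ _
    _ = |φ (a + ε * z + √ε * w) - φ a - (ε * z + √ε * w) * deriv φ a| / ε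
          + |z| * |deriv φ a| := by rw [abs_div, abs_of_pos hε0, abs_mul]
    _ ≤ C₂ * (2 * ε * (z ^ 2 + w ^ 2)) / ε + |z| * C₁ := by
        gcongr
        · exact hR.trans (mul_le_mul_of_nonneg_left (sq_perturbation_le hε0.le hε1 z w) hC₂0)
        · exact hC₁ a
    _ = 2 * C₂ * (z ^ 2 + w ^ 2) + C₁ * |z| := by
        field_simp

lemma tendsto_perturbationQuotient (hφ : ContDiff ℝ 2 φ) (a z w : ℝ) :
    Tendsto (perturbationQuotient φ a z w) (𝓝[>] 0)
      (𝓝 (z * deriv φ a + w ^ 2 / 2 * deriv (deriv φ) a)) := by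
  set R : ℝ → ℝ := fun x =>
    φ x - φ a - (x - a) * deriv φ a - (x - a) ^ 2 / 2 * deriv (deriv φ) a
  have hx : Tendsto (fun ε : ℝ => a + ε * z + √ε * w) (𝓝[>] 0) (𝓝 a) := by
    have hcont : Continuous fun ε : ℝ => a + ε * z + √ε * w := by fun_prop
    simpa using (hcont.continuousWithinAt (s := Set.Ioi 0) (x := 0)).tendsto
  have hsq : (fun ε : ℝ => (a + ε * z + √ε * w - a) ^ 2) =O[𝓝[>] 0] fun ε => ε := by
    refine IsBigO.of_bound (2 * (z ^ 2 + w ^ 2)) ?_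
    filter_upwards [Ioc_mem_nhdsGT (zero_lt_one' ℝ)] with ε ⟨hε0, hε1⟩
    calc ‖(a + ε * z + √ε * w - a) ^ 2‖ = (ε * z + √ε * w) ^ 2 := by
          rw [Real.norm_of_nonneg (sq_nonneg _)]
          ring
      _ ≤ 2 * ε * (z ^ 2 + w ^ 2) := sq_perturbation_le hε0.le hε1 z w
      _ = 2 * (z ^ 2 + w ^ 2) * ‖ε‖ := by
          rw [Real.norm_of_nonneg hε0.le]
          ring
  have hR : Tendsto (fun ε => R (a + ε * z + √ε * w) / ε) (𝓝[>] 0) (𝓝 0) :=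
    (((isLittleO_taylor_two hφ a).comp_tendsto hx).trans_isBigO hsq).tendsto_div_nhds_zero
  have hlim := (hR.add ((tendsto_sq_perturbation_div z w).div_const 2 |>.mul_const
    (deriv (deriv φ) a))).add_const (z * deriv φ a)
  rw [zero_add, add_comm] at hlim
  refine hlim.congr' ?_
  filter_upwards [self_mem_nhdsWithin] with ε (hε : 0 < ε)
  rw [perturbationQuotient_eq a z w hε.ne']
  simp only [R, show a + ε * z + √ε * w - a = ε * z + √ε * w by ring]
  field_simp
  ring

end PerturbationQuotient

section Integral

variable {Ω : Type*} [MeasurableSpace Ω] {P : Measure Ω} {φ χ : ℝ → ℝ} {A Z W : Ω → ℝ}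

lemma aestronglyMeasurable_perturbationQuotient_mul (hφ : ContDiff ℝ 2 φ) (hχ : Measurable χ)
    (hA : Measurable A) (hZ : AEStronglyMeasurable Z P) (hW : AEStronglyMeasurable W P) (ε : ℝ) :
    AEStronglyMeasurable (fun ω => perturbationQuotient φ (A ω) (Z ω) (W ω) ε * χ (A ω)) P := by
  have hφ' : Continuous (deriv φ) := hφ.continuous_deriv one_le_two
  have hφc : Continuous φ := hφ.continuous
  have hcont : Continuous fun p : ℝ × ℝ × ℝ => perturbationQuotient φ p.1 p.2.1 p.2.2 ε := by
    unfold perturbationQuotient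
    fun_prop
  exact (hcont.comp_aestronglyMeasurable (hA.aestronglyMeasurable.prodMk (hZ.prodMk hW))).mul
    (hχ.comp hA).aestronglyMeasurable

lemma MeasureTheory.Integrable.mul_comp_of_abs_le {X : Ω → ℝ} {g : ℝ → ℝ} {C : ℝ}
    (hX : Integrable X P) (hg : Measurable g) (hA : Measurable A) (hC : ∀ x, |g x| ≤ C) :
    Integrable (fun ω => X ω * g (A ω)) P :=
  hX.mul_bdd (hg.comp hA).aestronglyMeasurable (ae_of_all _ fun ω => hC (A ω))

lemma integrable_perturbationQuotient_bound [IsFiniteMeasure P] (hZ : MemLp Z 2 P)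
    (hW : MemLp W 2 P) (c₁ c₂ c₃ : ℝ) :
    Integrable (fun ω => (2 * c₂ * (Z ω ^ 2 + W ω ^ 2) + c₁ * |Z ω|) * c₃) P :=
  (((hZ.integrable_sq.add hW.integrable_sq).const_mul _).add
    ((hZ.integrable one_le_two).abs.const_mul _)).mul_const _

variable {C₁ C₂ C₃ : ℝ}

lemma norm_perturbationQuotient_mul_le (hφ : ContDiff ℝ 2 φ)
    (hC₁ : ∀ x, |deriv φ x| ≤ C₁) (hC₂ : ∀ x, |deriv (deriv φ) x| ≤ C₂) (hC₃ : ∀ x, |χ x| ≤ C₃)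
    (a z w : ℝ) {ε : ℝ} (hε0 : 0 < ε) (hε1 : ε ≤ 1) :
    ‖perturbationQuotient φ a z w ε * χ a‖ ≤ (2 * C₂ * (z ^ 2 + w ^ 2) + C₁ * |z|) * C₃ := by
  have hQ := abs_perturbationQuotient_le hφ hC₁ hC₂ a z w hε0 hε1
  rw [Real.norm_eq_abs, abs_mul]
  exact mul_le_mul hQ (hC₃ a) (abs_nonneg _) ((abs_nonneg _).trans hQ)

lemma integrable_perturbationQuotient_mul [IsFiniteMeasure P] (hφ : ContDiff ℝ 2 φ)
    (hC₁ : ∀ x, |deriv φ x| ≤ C₁) (hC₂ : ∀ x, |deriv (deriv φ) x| ≤ C₂)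
    (hχ : Measurable χ) (hC₃ : ∀ x, |χ x| ≤ C₃) (hA : Measurable A) (hZ : MemLp Z 2 P)
    (hW : MemLp W 2 P) {ε : ℝ} (hε0 : 0 < ε) (hε1 : ε ≤ 1) :
    Integrable (fun ω => perturbationQuotient φ (A ω) (Z ω) (W ω) ε * χ (A ω)) P :=
  (integrable_perturbationQuotient_bound hZ hW C₁ C₂ C₃).mono'
    (aestronglyMeasurable_perturbationQuotient_mul hφ hχ hA hZ.1 hW.1 ε)
    (ae_of_all _ fun _ => norm_perturbationQuotient_mul_le hφ hC₁ hC₂ hC₃ _ _ _ hε0 hε1)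

lemma tendsto_integral_perturbationQuotient_mul [IsFiniteMeasure P] (hφ : ContDiff ℝ 2 φ)
    (hC₁ : ∀ x, |deriv φ x| ≤ C₁) (hC₂ : ∀ x, |deriv (deriv φ) x| ≤ C₂)
    (hχ : Measurable χ) (hC₃ : ∀ x, |χ x| ≤ C₃) (hA : Measurable A) (hZ : MemLp Z 2 P)
    (hW : MemLp W 2 P) :
    Tendsto (fun ε => ∫ ω, perturbationQuotient φ (A ω) (Z ω) (W ω) ε * χ (A ω) ∂P) (𝓝[>] 0)
      (𝓝 ((∫ ω, Z ω * deriv φ (A ω) * χ (A ω) ∂P)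
        + (1/2) * ∫ ω, W ω ^ 2 * deriv (deriv φ) (A ω) * χ (A ω) ∂P)) := by
  have hφ' : Measurable (deriv φ) := (hφ.continuous_deriv one_le_two).measurable
  have hφ'' : Measurable (deriv (deriv φ)) := (hφ.iterate_deriv' 0 2).continuous.measurable
  have hZφ' : Integrable (fun ω => Z ω * deriv φ (A ω) * χ (A ω)) P :=
    ((hZ.integrable one_le_two).mul_comp_of_abs_le hφ' hA hC₁).mul_comp_of_abs_le hχ hA hC₃
  have hWφ'' : Integrable (fun ω => W ω ^ 2 * deriv (deriv φ) (A ω) * χ (A ω)) P :=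
    (hW.integrable_sq.mul_comp_of_abs_le hφ'' hA hC₂).mul_comp_of_abs_le hχ hA hC₃
  have hdom := tendsto_integral_filter_of_dominated_convergence _
    (Eventually.of_forall (aestronglyMeasurable_perturbationQuotient_mul hφ hχ hA hZ.1 hW.1))
    (by
      filter_upwards [Ioc_mem_nhdsGT one_pos] with ε ⟨hε0, hε1⟩
      exact ae_of_all _ fun _ => norm_perturbationQuotient_mul_le hφ hC₁ hC₂ hC₃ _ _ _ hε0 hε1)
    (integrable_perturbationQuotient_bound hZ hW C₁ C₂ C₃)
    (ae_of_all _ fun ω => (tendsto_perturbationQuotient hφ (A ω) (Z ω) (W ω)).mul_const (χ (A ω)))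
  convert hdom using 2
  rw [← integral_const_mul, ← integral_add hZφ' (hWφ''.const_mul _)]
  exact integral_congr_ae (ae_of_all _ fun ω => by ring)

lemma one_div_mul_integral_sub_eq_integral_perturbationQuotient {ε : ℝ} (hε : 0 < ε)
    (hQ : Integrable (fun ω => perturbationQuotient φ (A ω) (Z ω) (W ω) ε * χ (A ω)) P)
    (hc : Integrable (fun ω => W ω * deriv φ (A ω) * χ (A ω)) P)
    (hc0 : ∫ ω, W ω * deriv φ (A ω) * χ (A ω) ∂P = 0) :
    (1/ε) * ∫ ω, (φ (A ω + ε * Z ω + √ε * W ω) - φ (A ω)) * χ (A ω) ∂P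
      = ∫ ω, perturbationQuotient φ (A ω) (Z ω) (W ω) ε * χ (A ω) ∂P := by
  have hsplit : ∀ ω, (φ (A ω + ε * Z ω + √ε * W ω) - φ (A ω)) * χ (A ω)
      = ε * (perturbationQuotient φ (A ω) (Z ω) (W ω) ε * χ (A ω))
        + √ε * (W ω * deriv φ (A ω) * χ (A ω)) := fun ω => by
    rw [perturbationQuotient]
    field_simp
    ring
  simp_rw [hsplit]
  rw [integral_add (hQ.const_mul ε) (hc.const_mul _), integral_const_mul, integral_const_mul, hc0,
    mul_zero, add_zero, ← mul_assoc, one_div_mul_cancel hε.ne', one_mul]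

end Integral

section Independence

variable {Ω β : Type*} [MeasurableSpace Ω] [MeasurableSpace β] {P : Measure Ω}

lemma ProbabilityTheory.IndepFun.memLp_two_mul {X Y : Ω → ℝ} (h : IndepFun X Y P)
    (hX : MemLp X 2 P) (hY : MemLp Y 2 P) : MemLp (fun ω => X ω * Y ω) 2 P := by
  refine (memLp_two_iff_integrable_sq (hX.1.mul hY.1)).2 ?_
  exact ((h.comp (measurable_id.pow_const 2) (measurable_id.pow_const 2)).integrable_mul
    hX.integrable_sq hY.integrable_sq).congr (ae_of_all _ fun ω => (mul_pow (X ω) (Y ω) 2).symm)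

variable {G : Ω → ℝ} {V : Ω → β} {f : β → ℝ}

lemma ProbabilityTheory.IndepFun.integrable_mul_comp (h : IndepFun G V P) (hG : Integrable G P)
    (hf : Measurable f) (hfV : Integrable (fun ω => f (V ω)) P) :
    Integrable (fun ω => G ω * f (V ω)) P :=
  (h.comp measurable_id hf).integrable_mul hG hfV

lemma ProbabilityTheory.IndepFun.integral_mul_comp_eq_zero (h : IndepFun G V P)
    (hG : AEMeasurable G P) (hV : AEMeasurable V P) (hf : Measurable f)
    (hG0 : ∫ ω, G ω ∂P = 0) : ∫ ω, G ω * f (V ω) ∂P = 0 := by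
  have := h.integral_fun_comp_mul_comp (f := fun x => x) hG hV measurable_id.aestronglyMeasurable
    hf.aestronglyMeasurable
  rw [this, hG0, zero_mul]

lemma ProbabilityTheory.IndepFun.integral_sq_mul_comp (h : IndepFun G V P)
    (hG : AEMeasurable G P) (hV : AEMeasurable V P) (hf : Measurable f)
    (hG1 : ∫ ω, G ω ^ 2 ∂P = 1) : ∫ ω, G ω ^ 2 * f (V ω) ∂P = ∫ ω, f (V ω) ∂P := by
  have := h.integral_fun_comp_mul_comp (f := fun x => x ^ 2) hG hV
    (measurable_id.pow_const 2).aestronglyMeasurable hf.aestronglyMeasurable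
  rw [this, hG1, one_mul]

end Independence

theorem stmt8_general
    {Ω : Type*} [MeasurableSpace Ω]
    (P : Measure Ω) [IsProbabilityMeasure P]
    (Y Z T G : Ω → ℝ)
    (hYm : Measurable Y) (hGm : Measurable G)
    (hZ2 : MemLp Z 2 P) (hT2 : MemLp T 2 P)
    (hGindep : IndepFun G (fun ω => (Y ω, Z ω, T ω)) P)
    (hGc : ∫ ω, G ω ∂P = 0) (hGv : ∫ ω, (G ω)^2 ∂P = 1)
    (φ : ℝ → ℝ) (hφ : ContDiff ℝ 2 φ)
    (hφ'b : ∃ C, ∀ x, |deriv φ x| ≤ C)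
    (hφ''b : ∃ C, ∀ x, |deriv (deriv φ) x| ≤ C)
    (χ : ℝ → ℝ) (hχm : Measurable χ) (hχb : ∃ C, ∀ x, |χ x| ≤ C) :
    Tendsto (fun ε : ℝ => (1/ε) *
        ∫ ω, (φ (Y ω + ε * Z ω + Real.sqrt ε * T ω * G ω) - φ (Y ω)) * χ (Y ω) ∂P)
      (nhdsWithin 0 (Set.Ioi 0))
      (nhds ((∫ ω, Z ω * deriv φ (Y ω) * χ (Y ω) ∂P)
        + (1/2) * ∫ ω, (T ω)^2 * deriv (deriv φ) (Y ω) * χ (Y ω) ∂P)) := by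
  obtain ⟨C₁, hC₁⟩ := hφ'b
  obtain ⟨C₂, hC₂⟩ := hφ''b
  obtain ⟨C₃, hC₃⟩ := hχb
  have hφ' : Measurable (deriv φ) := (hφ.continuous_deriv one_le_two).measurable
  have hφ'' : Measurable (deriv (deriv φ)) := (hφ.iterate_deriv' 0 2).continuous.measurable
  have hV : AEMeasurable (fun ω => (Y ω, Z ω, T ω)) P :=
    hYm.aemeasurable.prodMk (hZ2.aemeasurable.prodMk hT2.aemeasurable)
  have hG2 : MemLp G 2 P := (memLp_two_iff_integrable_sq hGm.aestronglyMeasurable).2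
    (Integrable.of_integral_ne_zero (by simp [hGv]))
  have hTG : MemLp (fun ω => T ω * G ω) 2 P :=
    (hGindep.symm.comp (measurable_snd.comp measurable_snd) measurable_id).memLp_two_mul hT2 hG2
  have hc : Measurable fun p : ℝ × ℝ × ℝ => p.2.2 * deriv φ p.1 * χ p.1 := by fun_prop
  have hreorder : (fun ω => T ω * G ω * deriv φ (Y ω) * χ (Y ω))
      = fun ω => G ω * (T ω * deriv φ (Y ω) * χ (Y ω)) := funext fun ω => by ring
  have hcentered : Integrable (fun ω => T ω * G ω * deriv φ (Y ω) * χ (Y ω)) P := by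
    rw [hreorder]
    exact hGindep.integrable_mul_comp (hG2.integrable one_le_two) hc
      (((hT2.integrable one_le_two).mul_comp_of_abs_le hφ' hYm hC₁).mul_comp_of_abs_le hχm hYm hC₃)
  have hcentered0 : ∫ ω, T ω * G ω * deriv φ (Y ω) * χ (Y ω) ∂P = 0 := by
    rw [hreorder]
    exact hGindep.integral_mul_comp_eq_zero hGm.aemeasurable hV hc hGc
  have hsecond : ∫ ω, (T ω * G ω) ^ 2 * deriv (deriv φ) (Y ω) * χ (Y ω) ∂P
      = ∫ ω, T ω ^ 2 * deriv (deriv φ) (Y ω) * χ (Y ω) ∂P := by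
    rw [← hGindep.integral_sq_mul_comp hGm.aemeasurable hV
      (f := fun p => p.2.2 ^ 2 * deriv (deriv φ) p.1 * χ p.1) (by fun_prop) hGv]
    exact integral_congr_ae (ae_of_all _ fun ω => by ring)
  rw [← hsecond]
  refine (tendsto_integral_perturbationQuotient_mul hφ hC₁ hC₂ hχm hC₃ hYm hZ2 hTG).congr' ?_
  filter_upwards [Ioc_mem_nhdsGT one_pos] with ε ⟨hε0, hε1⟩
  simp only [mul_assoc (√ε)]
  exact (one_div_mul_integral_sub_eq_integral_perturbationQuotient hε0
    (integrable_perturbationQuotient_mul hφ hC₁ hC₂ hχm hC₃ hYm hZ2 hTG hε0 hε1)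
    hcentered hcentered0).symm

theorem stmt8
    {Ω : Type*} [MeasurableSpace Ω]
    (P : Measure Ω) [IsProbabilityMeasure P]
    (Y Z T G : Ω → ℝ)
    (hYm : Measurable Y) (hZm : Measurable Z) (hTm : Measurable T) (hGm : Measurable G)
    (hZ2 : MemLp Z 2 P) (hT2 : MemLp T 2 P)
    (hGindep : IndepFun G (fun ω => (Y ω, Z ω, T ω)) P)
    (hGc : ∫ ω, G ω ∂P = 0) (hGv : ∫ ω, (G ω)^2 ∂P = 1)
    (φ : ℝ → ℝ) (hφ : ContDiff ℝ 2 φ)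
    (hφb : ∃ C, ∀ x, |φ x| ≤ C) (hφ'b : ∃ C, ∀ x, |deriv φ x| ≤ C)
    (hφ''b : ∃ C, ∀ x, |deriv (deriv φ) x| ≤ C)
    (χ : ℝ → ℝ) (hχm : Measurable χ) (hχb : ∃ C, ∀ x, |χ x| ≤ C) :
    Tendsto (fun ε : ℝ => (1/ε) *
        ∫ ω, (φ (Y ω + ε * Z ω + Real.sqrt ε * T ω * G ω) - φ (Y ω)) * χ (Y ω) ∂P)
      (nhdsWithin 0 (Set.Ioi 0))
      (nhds ((∫ ω, Z ω * deriv φ (Y ω) * χ (Y ω) ∂P)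
        + (1/2) * ∫ ω, (T ω)^2 * deriv (deriv φ) (Y ω) * χ (Y ω) ∂P)) :=
  stmt8_general P Y Z T G hYm hGm hZ2 hT2 hGindep hGc hGv φ hφ hφ'b hφ''b χ hχm hχb
end

section
/- With the same setup (Y_ε = Y + εZ + √ε T G, Z and T square integrable, G independent of (Y,Z,T), centered, unit variance), for all φ, χ ∈ C¹_b(ℝ): (1/ε) E[(φ(Y_ε)−φ(Y))(χ(Y_ε)−χ(Y))] → E[T² φ'(Y) χ'(Y)] as ε → 0⁺. -/
/-!
With `h = ε z + √ε w = √ε (√ε z + w)`, the quantity `(f (y + h) - f y) (g (y + h) - g y) / ε` is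
the product of the difference quotients of `f` and `g` at `y` with `(√ε z + w)²`, so it tends to
`f'(y) g'(y) w²` as `ε → 0⁺`; for `ε ≤ 1` Lipschitz bounds dominate it by
`2 Lip(f) Lip(g) (z² + w²)`. Dominated convergence with `w = T G` gives the limit
`E[φ'(Y) χ'(Y) (T G)²]`, and independence of `G` from `(Y, Z, T)` makes `(T G)²` integrable and
replaces `G²` by `E[G²] = 1`.
-/

open MeasureTheory ProbabilityTheory Filter Topology
open scoped NNReal

theorem lipschitzWith_of_abs_deriv_le {f : ℝ → ℝ} {C : ℝ} (hf : Differentiable ℝ f)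
    (hC : ∀ x, |deriv f x| ≤ C) : LipschitzWith C.toNNReal f :=
  lipschitzWith_of_nnnorm_deriv_le hf fun x => by
    rw [← NNReal.coe_le_coe, coe_nnnorm, Real.norm_eq_abs, Real.coe_toNNReal']
    exact (hC x).trans (le_max_left _ _)

section Deterministic

variable {f g : ℝ → ℝ} {y : ℝ}

theorem tendsto_inv_mul_sub_mul_sub {α : Type*} {l : Filter α} (hf : DifferentiableAt ℝ f y)
    (hg : DifferentiableAt ℝ g y) {h ε : α → ℝ} {c : ℝ} (hh : Tendsto h l (𝓝 0))
    (hc : Tendsto (fun a => (ε a)⁻¹ * h a ^ 2) l (𝓝 c)) :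
    Tendsto (fun a => (ε a)⁻¹ * ((f (y + h a) - f y) * (g (y + h a) - g y))) l
      (𝓝 (deriv f y * deriv g y * c)) := by
  have hy : Tendsto (fun a => y + h a) l (𝓝 y) := by
    simpa using (tendsto_const_nhds (x := y)).add hh
  have hslope {u : ℝ → ℝ} (hu : DifferentiableAt ℝ u y) :
      Tendsto (fun a => dslope u y (y + h a)) l (𝓝 (deriv u y)) := by
    rw [← dslope_same]
    exact (continuousAt_dslope_same.2 hu).tendsto.comp hy
  refine (((hslope hf).mul (hslope hg)).mul hc).congr fun a => ?_
  have hsub (u : ℝ → ℝ) : u (y + h a) - u y = h a * dslope u y (y + h a) := by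
    simpa using (sub_smul_dslope u y (y + h a)).symm
  rw [hsub f, hsub g]
  ring

theorem abs_sub_mul_sub_le {Kf Kg : ℝ≥0} (hf : LipschitzWith Kf f) (hg : LipschitzWith Kg g)
    (h : ℝ) : |(f (y + h) - f y) * (g (y + h) - g y)| ≤ Kf * Kg * h ^ 2 := by
  have hfh := hf.dist_le_mul (y + h) y
  have hgh := hg.dist_le_mul (y + h) y
  simp only [Real.dist_eq, add_sub_cancel_left] at hfh hgh
  calc |(f (y + h) - f y) * (g (y + h) - g y)| = |f (y + h) - f y| * |g (y + h) - g y| :=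
        abs_mul _ _
    _ ≤ (Kf * |h|) * (Kg * |h|) := mul_le_mul hfh hgh (abs_nonneg _) (by positivity)
    _ = Kf * Kg * h ^ 2 := by rw [← sq_abs h]; ring

end Deterministic

section DiffusivePerturbation

variable (z w : ℝ)

theorem sq_diffusive {ε : ℝ} (hε : 0 ≤ ε) :
    (ε * z + √ε * w) ^ 2 = ε * (√ε * z + w) ^ 2 := by
  have hs : √ε ^ 2 = ε := Real.sq_sqrt hε
  calc (ε * z + √ε * w) ^ 2 = (√ε ^ 2 * z + √ε * w) ^ 2 := by rw [hs]
    _ = √ε ^ 2 * (√ε * z + w) ^ 2 := by ring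
    _ = ε * (√ε * z + w) ^ 2 := by rw [hs]

theorem inv_mul_sq_diffusive_le {ε : ℝ} (hε : ε ∈ Set.Ioc 0 1) :
    ε⁻¹ * (ε * z + √ε * w) ^ 2 ≤ 2 * (z ^ 2 + w ^ 2) := by
  rw [sq_diffusive z w hε.1.le, inv_mul_cancel_left₀ hε.1.ne']
  have hs0 : 0 ≤ √ε := Real.sqrt_nonneg ε
  have hs1 : √ε ≤ 1 := Real.sqrt_le_one.2 hε.2
  nlinarith [sq_nonneg (√ε * z - w), mul_le_mul_of_nonneg_right (mul_le_one₀ hs1 hs0 hs1)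
    (sq_nonneg z)]

theorem tendsto_diffusive : Tendsto (fun ε : ℝ => ε * z + √ε * w) (𝓝[>] 0) (𝓝 0) := by
  have hc : Continuous fun ε : ℝ => ε * z + √ε * w := by fun_prop
  simpa using hc.continuousWithinAt.tendsto (s := Set.Ioi 0) (x := 0)

theorem tendsto_inv_mul_sq_diffusive :
    Tendsto (fun ε : ℝ => ε⁻¹ * (ε * z + √ε * w) ^ 2) (𝓝[>] 0) (𝓝 (w ^ 2)) := by
  have hc : Continuous fun ε : ℝ => (√ε * z + w) ^ 2 := by fun_prop
  have hlim : Tendsto (fun ε : ℝ => (√ε * z + w) ^ 2) (𝓝[>] 0) (𝓝 (w ^ 2)) := by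
    simpa using hc.continuousWithinAt.tendsto (s := Set.Ioi 0) (x := 0)
  refine hlim.congr' ?_
  filter_upwards [self_mem_nhdsWithin] with ε (hε : 0 < ε)
  rw [sq_diffusive z w hε.le, inv_mul_cancel_left₀ hε.ne']

end DiffusivePerturbation

theorem tendsto_integral_inv_mul_sub_mul_sub {Ω : Type*} [MeasurableSpace Ω] {P : Measure Ω}
    {f g : ℝ → ℝ} {Kf Kg : ℝ≥0} (hf : Differentiable ℝ f) (hg : Differentiable ℝ g)
    (hfL : LipschitzWith Kf f) (hgL : LipschitzWith Kg g) {Y Z W : Ω → ℝ}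
    (hY : AEStronglyMeasurable Y P) (hZ : MemLp Z 2 P) (hW : MemLp W 2 P) :
    Tendsto (fun ε : ℝ => ∫ ω, ε⁻¹ * ((f (Y ω + ε * Z ω + √ε * W ω) - f (Y ω))
        * (g (Y ω + ε * Z ω + √ε * W ω) - g (Y ω))) ∂P) (𝓝[>] 0)
      (𝓝 (∫ ω, deriv f (Y ω) * deriv g (Y ω) * W ω ^ 2 ∂P)) := by
  simp_rw [add_assoc]
  refine tendsto_integral_filter_of_dominated_convergence
    (fun ω => Kf * Kg * (2 * (Z ω ^ 2 + W ω ^ 2))) ?_ ?_ ?_ ?_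
  · refine .of_forall fun ε => ?_
    have hYε := hY.add ((hZ.1.const_mul ε).add (hW.1.const_mul √ε))
    exact ((hfL.continuous.comp_aestronglyMeasurable hYε).sub
      (hfL.continuous.comp_aestronglyMeasurable hY)).mul
      ((hgL.continuous.comp_aestronglyMeasurable hYε).sub
      (hgL.continuous.comp_aestronglyMeasurable hY)) |>.const_mul _
  · filter_upwards [Ioc_mem_nhdsGT (zero_lt_one' ℝ)] with ε hε
    refine .of_forall fun ω => ?_
    rw [Real.norm_eq_abs, abs_mul, abs_inv, abs_of_pos hε.1]
    calc ε⁻¹ * |_| ≤ ε⁻¹ * (Kf * Kg * (ε * Z ω + √ε * W ω) ^ 2) :=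
          mul_le_mul_of_nonneg_left (abs_sub_mul_sub_le hfL hgL _) (inv_pos.2 hε.1).le
      _ = Kf * Kg * (ε⁻¹ * (ε * Z ω + √ε * W ω) ^ 2) := by ring
      _ ≤ Kf * Kg * (2 * (Z ω ^ 2 + W ω ^ 2)) :=
          mul_le_mul_of_nonneg_left (inv_mul_sq_diffusive_le _ _ hε) (by positivity)
  · exact ((hZ.integrable_sq.add hW.integrable_sq).const_mul 2).const_mul _
  · exact .of_forall fun ω => tendsto_inv_mul_sub_mul_sub (hf _) (hg _)
      (tendsto_diffusive _ _) (tendsto_inv_mul_sq_diffusive _ _)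

section Independence

variable {Ω : Type*} [MeasurableSpace Ω] {P : Measure Ω} {G V : Ω → ℝ}

theorem ProbabilityTheory.IndepFun.integrable_sq_mul (hind : IndepFun G V P)
    (hG : Integrable (fun ω => G ω ^ 2) P) (hV : Integrable V P) :
    Integrable (fun ω => G ω ^ 2 * V ω) P :=
  (hind.comp (measurable_id.pow_const 2) measurable_id).integrable_mul hG hV

theorem ProbabilityTheory.IndepFun.integral_sq_mul (hind : IndepFun G V P)
    (hGm : AEStronglyMeasurable G P) (hVm : AEStronglyMeasurable V P)
    (hG : ∫ ω, G ω ^ 2 ∂P = 1) : ∫ ω, G ω ^ 2 * V ω ∂P = ∫ ω, V ω ∂P := by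
  have hind2 : IndepFun (fun ω => G ω ^ 2) V P :=
    hind.comp (measurable_id.pow_const 2) measurable_id
  simpa [hG] using hind2.integral_mul_eq_mul_integral (hGm.pow 2) hVm

end Independence

theorem stmt9_general
    {Ω : Type*} [MeasurableSpace Ω]
    (P : Measure Ω)
    (Y Z T G : Ω → ℝ)
    (hYm : Measurable Y) (hGm : Measurable G)
    (hZ2 : MemLp Z 2 P) (hT2 : MemLp T 2 P)
    (hGindep : IndepFun G (fun ω => (Y ω, Z ω, T ω)) P)
    (hGv : ∫ ω, (G ω)^2 ∂P = 1)
    (φ χ : ℝ → ℝ) (hφ : ContDiff ℝ 1 φ) (hχ : ContDiff ℝ 1 χ)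
    (hφ'b : ∃ C, ∀ x, |deriv φ x| ≤ C)
    (hχ'b : ∃ C, ∀ x, |deriv χ x| ≤ C) :
    Tendsto (fun ε : ℝ => (1/ε) *
        ∫ ω, (φ (Y ω + ε * Z ω + Real.sqrt ε * T ω * G ω) - φ (Y ω))
            * (χ (Y ω + ε * Z ω + Real.sqrt ε * T ω * G ω) - χ (Y ω)) ∂P)
      (nhdsWithin 0 (Set.Ioi 0))
      (nhds (∫ ω, (T ω)^2 * deriv φ (Y ω) * deriv χ (Y ω) ∂P)) := by
  obtain ⟨C₁, hC₁⟩ := hφ'b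
  obtain ⟨C₂, hC₂⟩ := hχ'b
  have hφd := hφ.differentiable one_ne_zero
  have hχd := hχ.differentiable one_ne_zero
  have hG2 : Integrable (fun ω => G ω ^ 2) P := .of_integral_ne_zero (by simp [hGv])
  have hTG : MemLp (fun ω => T ω * G ω) 2 P := by
    refine (memLp_two_iff_integrable_sq (hT2.1.mul hGm.aestronglyMeasurable)).2 ?_
    simpa [mul_pow, mul_comm] using (hGindep.comp measurable_id
      ((measurable_snd.comp measurable_snd).pow_const 2)).integrable_sq_mul hG2 hT2.integrable_sq
  have hlim := tendsto_integral_inv_mul_sub_mul_sub hφd hχd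
    (lipschitzWith_of_abs_deriv_le hφd hC₁) (lipschitzWith_of_abs_deriv_le hχd hC₂)
    hYm.aestronglyMeasurable hZ2 hTG
  have hind : IndepFun G (fun ω => T ω ^ 2 * deriv φ (Y ω) * deriv χ (Y ω)) P :=
    hGindep.comp (ψ := fun p : ℝ × ℝ × ℝ => p.2.2 ^ 2 * deriv φ p.1 * deriv χ p.1)
      measurable_id (by fun_prop)
  have hVm : AEStronglyMeasurable (fun ω => T ω ^ 2 * deriv φ (Y ω) * deriv χ (Y ω)) P :=
    ((hT2.1.pow 2).mul ((measurable_deriv φ).comp hYm).aestronglyMeasurable).mul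
      ((measurable_deriv χ).comp hYm).aestronglyMeasurable
  rw [← hind.integral_sq_mul hGm.aestronglyMeasurable hVm hGv]
  convert hlim using 2 with ε
  · rw [one_div, ← integral_const_mul]
    simp only [mul_assoc]
  · congr 1 with ω
    ring

theorem stmt9
    {Ω : Type*} [MeasurableSpace Ω]
    (P : Measure Ω) [IsProbabilityMeasure P]
    (Y Z T G : Ω → ℝ)
    (hYm : Measurable Y) (hZm : Measurable Z) (hTm : Measurable T) (hGm : Measurable G)
    (hZ2 : MemLp Z 2 P) (hT2 : MemLp T 2 P)
    (hGindep : IndepFun G (fun ω => (Y ω, Z ω, T ω)) P)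
    (hGc : ∫ ω, G ω ∂P = 0) (hGv : ∫ ω, (G ω)^2 ∂P = 1)
    (φ χ : ℝ → ℝ) (hφ : ContDiff ℝ 1 φ) (hχ : ContDiff ℝ 1 χ)
    (hφb : ∃ C, ∀ x, |φ x| ≤ C) (hφ'b : ∃ C, ∀ x, |deriv φ x| ≤ C)
    (hχb : ∃ C, ∀ x, |χ x| ≤ C) (hχ'b : ∃ C, ∀ x, |deriv χ x| ≤ C) :
    Tendsto (fun ε : ℝ => (1/ε) *
        ∫ ω, (φ (Y ω + ε * Z ω + Real.sqrt ε * T ω * G ω) - φ (Y ω))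
            * (χ (Y ω + ε * Z ω + Real.sqrt ε * T ω * G ω) - χ (Y ω)) ∂P)
      (nhdsWithin 0 (Set.Ioi 0))
      (nhds (∫ ω, (T ω)^2 * deriv φ (Y ω) * deriv χ (Y ω) ∂P)) :=
  stmt9_general P Y Z T G hYm hGm hZ2 hT2 hGindep hGv φ χ hφ hχ hφ'b hχ'b
end

section
/- Suppose hypothesis (U) holds: for P_Y-a.e. y, the conditional law of Y_n given Y = y is δ_{η_n(y)} for a measurable map η_n. Suppose furthermore that for some α_n → +∞ and an algebra D, α_n E[(φ(Y_n) − φ(Y)) χ(Y)] → ⟨Ā[φ], χ⟩_{L²(P_Y)} for all φ ∈ D and all χ ∈ L²(P_Y). Then α_n E[(φ(Y_n) − φ(Y))²] → 0 for every φ ∈ D; consequently (H1)–(H3) hold with Ã = 0 and A̲ = −Ā. -/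
/-!
Under (U), `Yₙ = ηₙ(Y)` almost surely, so with `gₙ = φ ∘ ηₙ - φ` the hypothesis says that `αₙ gₙ`
converges weakly in `L²(P_Y)`. By the uniform boundedness principle `αₙ² ‖gₙ‖² ≤ K`, hence
`αₙ ‖gₙ‖² ≤ K / αₙ → 0`. The cross terms of (H3) are then controlled by `|ab| ≤ (a² + b²) / 2`,
and (H2) follows from (H3) and the hypothesis through
`(φ(Y) - φ(Yₙ)) χ(Yₙ) = -(φ(Yₙ) - φ(Y)) χ(Y) - (φ(Yₙ) - φ(Y)) (χ(Yₙ) - χ(Y))`.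
-/

open MeasureTheory ProbabilityTheory Filter

open scoped InnerProductSpace Topology

theorem exists_norm_le_of_forall_tendsto_inner {𝕜 H : Type*} [RCLike 𝕜] [NormedAddCommGroup H]
    [InnerProductSpace 𝕜 H] [CompleteSpace H] {G : ℕ → H}
    (hG : ∀ x, ∃ l, Tendsto (fun n => ⟪G n, x⟫_𝕜) atTop (𝓝 l)) :
    ∃ C, ∀ n, ‖G n‖ ≤ C := by
  obtain ⟨C, hC⟩ := banach_steinhaus (g := fun n => innerSL 𝕜 (G n)) fun x => by
    obtain ⟨l, hl⟩ := hG x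
    obtain ⟨C, hC⟩ := hl.norm.bddAbove_range
    exact ⟨C, fun n => hC ⟨n, rfl⟩⟩
  exact ⟨C, fun n => innerSL_apply_norm 𝕜 (G n) ▸ hC n⟩

theorem MeasureTheory.L2.inner_toLp_eq_integral_mul {X : Type*} [MeasurableSpace X]
    {μ : Measure X} {f g : X → ℝ} (hf : MemLp f 2 μ) (hg : MemLp g 2 μ) :
    ⟪hf.toLp f, hg.toLp g⟫_ℝ = ∫ x, f x * g x ∂μ := by
  rw [L2.inner_def]
  refine integral_congr_ae ?_
  filter_upwards [hf.coeFn_toLp, hg.coeFn_toLp] with x hfx hgx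
  simp [hfx, hgx, mul_comm]

section WeakL2

variable {X : Type*} [MeasurableSpace X] {μ : Measure X}

theorem tendsto_mul_integral_sq_of_forall_tendsto_mul_integral_mul {g : ℕ → X → ℝ}
    {α : ℕ → ℝ} (hg : ∀ n, MemLp (g n) 2 μ) (hα : Tendsto α atTop atTop)
    (hweak : ∀ χ : X → ℝ, MemLp χ 2 μ →
      ∃ l, Tendsto (fun n => α n * ∫ x, g n x * χ x ∂μ) atTop (𝓝 l)) :
    Tendsto (fun n => α n * ∫ x, g n x ^ 2 ∂μ) atTop (𝓝 0) := by
  have hαg n : MemLp (fun x => α n * g n x) 2 μ := (hg n).const_mul (α n)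
  have inner_eq n (χ : X → ℝ) (hχ : MemLp χ 2 μ) :
      ⟪(hαg n).toLp _, hχ.toLp χ⟫_ℝ = α n * ∫ x, g n x * χ x ∂μ := by
    rw [L2.inner_toLp_eq_integral_mul, ← integral_const_mul]
    simp only [mul_assoc]
  obtain ⟨C, hC⟩ := exists_norm_le_of_forall_tendsto_inner (𝕜 := ℝ)
    (G := fun n => (hαg n).toLp _) fun χ => by
      obtain ⟨l, hl⟩ := hweak χ (Lp.memLp χ)
      refine ⟨l, hl.congr fun n => ?_⟩
      rw [← inner_eq n χ (Lp.memLp χ), Lp.toLp_coeFn]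
  have sq_le n : α n ^ 2 * ∫ x, g n x ^ 2 ∂μ ≤ C ^ 2 := by
    calc α n ^ 2 * ∫ x, g n x ^ 2 ∂μ = ‖(hαg n).toLp _‖ ^ 2 := by
          rw [← real_inner_self_eq_norm_sq, L2.inner_toLp_eq_integral_mul, ← integral_const_mul]
          congr 1 with x
          ring
      _ ≤ C ^ 2 := pow_le_pow_left₀ (norm_nonneg _) (hC n) 2
  refine squeeze_zero' ?_ ?_ (tendsto_const_nhds.div_atTop hα (f := fun _ => C ^ 2))
  · filter_upwards [hα.eventually_ge_atTop 0] with n hn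
    exact mul_nonneg hn (integral_nonneg fun x => sq_nonneg _)
  · filter_upwards [hα.eventually_gt_atTop 0] with n hn
    rw [le_div_iff₀ hn]
    linarith [sq_le n]

theorem tendsto_mul_integral_mul_of_tendsto_mul_integral_sq {ι : Type*} {l : Filter ι}
    {f g : ι → X → ℝ} {α : ι → ℝ} (hf : ∀ i, MemLp (f i) 2 μ) (hg : ∀ i, MemLp (g i) 2 μ)
    (hα : ∀ᶠ i in l, 0 ≤ α i)
    (hf0 : Tendsto (fun i => α i * ∫ x, f i x ^ 2 ∂μ) l (𝓝 0))
    (hg0 : Tendsto (fun i => α i * ∫ x, g i x ^ 2 ∂μ) l (𝓝 0)) :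
    Tendsto (fun i => α i * ∫ x, f i x * g i x ∂μ) l (𝓝 0) := by
  have hlim :
      Tendsto (fun i => (α i * ∫ x, f i x ^ 2 ∂μ + α i * ∫ x, g i x ^ 2 ∂μ) / 2) l (𝓝 0) := by
    simpa using (hf0.add hg0).div_const 2
  refine squeeze_zero_norm' ?_ hlim
  filter_upwards [hα] with i hi
  have hint : Integrable (fun x => (f i x ^ 2 + g i x ^ 2) / 2) μ :=
    ((hf i).integrable_sq.add (hg i).integrable_sq).div_const 2
  have habs : ‖∫ x, f i x * g i x ∂μ‖ ≤ ∫ x, (f i x ^ 2 + g i x ^ 2) / 2 ∂μ :=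
    norm_integral_le_of_norm_le hint (ae_of_all _ fun x => by
      rw [Real.norm_eq_abs, abs_mul]
      nlinarith [sq_nonneg (|f i x| - |g i x|), sq_abs (f i x), sq_abs (g i x)])
  rw [integral_div, integral_add (hf i).integrable_sq (hg i).integrable_sq] at habs
  rw [norm_mul, Real.norm_of_nonneg hi]
  calc α i * ‖∫ x, f i x * g i x ∂μ‖
      ≤ α i * ((∫ x, f i x ^ 2 ∂μ + ∫ x, g i x ^ 2 ∂μ) / 2) := mul_le_mul_of_nonneg_left habs hi
    _ = _ := by ring

end WeakL2

section Transfer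

variable {Ω E : Type*} [MeasurableSpace Ω] [MeasurableSpace E] {P : Measure Ω}

theorem integral_comp_eq_integral_map_of_ae_eq_comp {F : Type*} [NormedAddCommGroup F]
    [NormedSpace ℝ F] {Y Z : Ω → E} {η : E → E} (hY : AEMeasurable Y P)
    (hZ : ∀ᵐ ω ∂P, Z ω = η (Y ω)) {H : E → E → F}
    (hH : AEStronglyMeasurable (fun y => H (η y) y) (P.map Y)) :
    ∫ ω, H (Z ω) (Y ω) ∂P = ∫ y, H (η y) y ∂P.map Y := by
  rw [integral_map hY hH]
  exact integral_congr_ae (by filter_upwards [hZ] with _ hω; rw [hω])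

theorem memLp_comp_of_abs_le [IsFiniteMeasure P] {φ : E → ℝ} (hφ : Measurable φ) {C : ℝ}
    (hC : ∀ x, |φ x| ≤ C) {Z : Ω → E} (hZ : AEMeasurable Z P) (p : ENNReal) :
    MemLp (fun ω => φ (Z ω)) p P :=
  MemLp.of_bound (hφ.comp_aemeasurable hZ).aestronglyMeasurable C (ae_of_all _ fun _ => hC _)

theorem tendsto_mul_integral_sq_sub_of_ae_eq_comp [IsFiniteMeasure P] {Y : Ω → E}
    {Z : ℕ → Ω → E} {η : ℕ → E → E} {α : ℕ → ℝ} {φ : E → ℝ} {C : ℝ} (hY : Measurable Y)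
    (hη : ∀ n, Measurable (η n)) (hZ : ∀ n, ∀ᵐ ω ∂P, Z n ω = η n (Y ω))
    (hφ : Measurable φ) (hC : ∀ x, |φ x| ≤ C) (hα : Tendsto α atTop atTop)
    (hweak : ∀ χ : E → ℝ, MemLp χ 2 (P.map Y) →
      ∃ l, Tendsto (fun n => α n * ∫ ω, (φ (Z n ω) - φ (Y ω)) * χ (Y ω) ∂P) atTop (𝓝 l)) :
    Tendsto (fun n => α n * ∫ ω, (φ (Z n ω) - φ (Y ω)) ^ 2 ∂P) atTop (𝓝 0) := by
  have hdiff n : MemLp (fun y => φ (η n y) - φ y) 2 (P.map Y) :=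
    (memLp_comp_of_abs_le hφ hC (hη n).aemeasurable 2).sub
      (memLp_comp_of_abs_le hφ hC aemeasurable_id 2)
  simp_rw [integral_comp_eq_integral_map_of_ae_eq_comp hY.aemeasurable (hZ _)
    (H := fun u y => (φ u - φ y) ^ 2) ((hdiff _).aestronglyMeasurable.pow 2)]
  refine tendsto_mul_integral_sq_of_forall_tendsto_mul_integral_mul hdiff hα fun χ hχ => ?_
  simpa only [integral_comp_eq_integral_map_of_ae_eq_comp hY.aemeasurable (hZ _)
    (H := fun u y => (φ u - φ y) * χ y) ((hdiff _).aestronglyMeasurable.mul hχ.1)]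
    using hweak χ hχ

end Transfer

theorem integral_sub_mul_eq_neg_integral_sub_mul_sub {X : Type*} [MeasurableSpace X]
    {μ : Measure X} {a b c d : X → ℝ} (ha : MemLp a 2 μ) (hb : MemLp b 2 μ) (hc : MemLp c 2 μ)
    (hd : MemLp d 2 μ) :
    ∫ x, (a x - b x) * d x ∂μ =
      -∫ x, (b x - a x) * c x ∂μ - ∫ x, (b x - a x) * (d x - c x) ∂μ := by
  have hba : MemLp (fun x => b x - a x) 2 μ := hb.sub ha
  have h1 : Integrable (fun x => -((b x - a x) * c x)) μ := (hba.integrable_mul hc).neg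
  have h2 : Integrable (fun x => (b x - a x) * (d x - c x)) μ := hba.integrable_mul (hd.sub hc)
  rw [← integral_neg, ← integral_sub h1 h2]
  congr 1 with x
  ring

theorem stmt18_general
    {Ω E : Type*} [MeasurableSpace Ω] [MeasurableSpace E]
    (P : Measure Ω) [IsProbabilityMeasure P]
    (Y : Ω → E) (hYm : Measurable Y) (Yn : ℕ → Ω → E)
    (D : Set (E → ℝ))
    (hD : ∀ φ ∈ D, Measurable φ ∧ ∃ C, ∀ x, |φ x| ≤ C)
    (α : ℕ → ℝ) (hα : Tendsto α atTop atTop)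
    (η : ℕ → E → E) (hηm : ∀ n, Measurable (η n))
    (hU : ∀ n, ∀ᵐ ω ∂P, Yn n ω = η n (Y ω))
    (Abar : (E → ℝ) → (E → ℝ))
    (H1 : ∀ φ ∈ D, ∀ χ : E → ℝ, MemLp χ 2 (P.map Y) →
      Tendsto (fun n => α n * ∫ ω, (φ (Yn n ω) - φ (Y ω)) * χ (Y ω) ∂P) atTop
        (nhds (∫ y, Abar φ y * χ y ∂(P.map Y)))) :
    (∀ φ ∈ D, Tendsto (fun n => α n * ∫ ω, (φ (Yn n ω) - φ (Y ω))^2 ∂P) atTop (nhds 0)) ∧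
    (∀ φ ∈ D, ∀ χ ∈ D,
      Tendsto (fun n => α n * ∫ ω, (φ (Y ω) - φ (Yn n ω)) * χ (Yn n ω) ∂P) atTop
        (nhds (∫ y, (-Abar φ y) * χ y ∂(P.map Y)))) ∧
    (∀ φ ∈ D, ∀ χ ∈ D,
      Tendsto (fun n => α n * ∫ ω, (φ (Yn n ω) - φ (Y ω)) * (χ (Yn n ω) - χ (Y ω)) ∂P)
        atTop (nhds 0)) := by
  have hYn n : AEMeasurable (Yn n) P :=
    ((hηm n).comp_aemeasurable hYm.aemeasurable).congr (EventuallyEq.symm (hU n))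
  have hmem {φ} (hφ : φ ∈ D) : MemLp φ 2 (P.map Y) :=
    memLp_comp_of_abs_le (hD φ hφ).1 (hD φ hφ).2.choose_spec aemeasurable_id 2
  have hcomp {φ} (hφ : φ ∈ D) {Z : Ω → E} (hZ : AEMeasurable Z P) :
      MemLp (fun ω => φ (Z ω)) 2 P :=
    memLp_comp_of_abs_le (hD φ hφ).1 (hD φ hφ).2.choose_spec hZ 2
  have hdiff {φ} (hφ : φ ∈ D) n : MemLp (fun ω => φ (Yn n ω) - φ (Y ω)) 2 P :=
    (hcomp hφ (hYn n)).sub (hcomp hφ hYm.aemeasurable)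
  have h_sq φ (hφ : φ ∈ D) :=
    tendsto_mul_integral_sq_sub_of_ae_eq_comp hYm hηm hU (hD φ hφ).1 (hD φ hφ).2.choose_spec hα
      fun χ hχ => ⟨_, H1 φ hφ χ hχ⟩
  have h_cross φ (hφ : φ ∈ D) χ (hχ : χ ∈ D) :=
    tendsto_mul_integral_mul_of_tendsto_mul_integral_sq (hdiff hφ) (hdiff hχ)
      (hα.eventually_ge_atTop 0) (h_sq φ hφ) (h_sq χ hχ)
  refine ⟨h_sq, fun φ hφ χ hχ => ?_, h_cross⟩
  convert (H1 φ hφ χ (hmem hχ)).neg.sub (h_cross φ hφ χ hχ) using 1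
  · funext n
    rw [integral_sub_mul_eq_neg_integral_sub_mul_sub (hcomp hφ hYm.aemeasurable)
      (hcomp hφ (hYn n)) (hcomp hχ hYm.aemeasurable) (hcomp hχ (hYn n))]
    ring
  · simp [integral_neg]

theorem stmt18
    {Ω E : Type*} [MeasurableSpace Ω] [MeasurableSpace E]
    (P : Measure Ω) [IsProbabilityMeasure P]
    (Y : Ω → E) (hYm : Measurable Y) (Yn : ℕ → Ω → E)
    (D : Set (E → ℝ))
    (hD : ∀ φ ∈ D, Measurable φ ∧ ∃ C, ∀ x, |φ x| ≤ C)
    (α : ℕ → ℝ) (hαpos : ∀ n, 0 < α n) (hα : Tendsto α atTop atTop)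
    (η : ℕ → E → E) (hηm : ∀ n, Measurable (η n))
    (hU : ∀ n, ∀ᵐ ω ∂P, Yn n ω = η n (Y ω))
    (Abar : (E → ℝ) → (E → ℝ))
    (hAL2 : ∀ φ ∈ D, MemLp (Abar φ) 2 (P.map Y))
    (H1 : ∀ φ ∈ D, ∀ χ : E → ℝ, MemLp χ 2 (P.map Y) →
      Tendsto (fun n => α n * ∫ ω, (φ (Yn n ω) - φ (Y ω)) * χ (Y ω) ∂P) atTop
        (nhds (∫ y, Abar φ y * χ y ∂(P.map Y)))) :
    (∀ φ ∈ D, Tendsto (fun n => α n * ∫ ω, (φ (Yn n ω) - φ (Y ω))^2 ∂P) atTop (nhds 0)) ∧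
    (∀ φ ∈ D, ∀ χ ∈ D,
      Tendsto (fun n => α n * ∫ ω, (φ (Y ω) - φ (Yn n ω)) * χ (Yn n ω) ∂P) atTop
        (nhds (∫ y, (-Abar φ y) * χ y ∂(P.map Y)))) ∧
    (∀ φ ∈ D, ∀ χ ∈ D,
      Tendsto (fun n => α n * ∫ ω, (φ (Yn n ω) - φ (Y ω)) * (χ (Yn n ω) - χ (Y ω)) ∂P)
        atTop (nhds 0)) :=
  stmt18_general P Y hYm Yn D hD α hα η hηm hU Abar H1
end
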